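/- arXiv:1811.08157 — 3 statements merged into one kernel-verified Lean document; each statement's English description precedes it below -/
import Mathlib

section
/- Let (x_i)_{i ∈ ℕ} be a sequence of distinct complex numbers with |x_i| → ∞ and let (y_i)_{i ∈ ℕ} be arbitrary complex numbers. Then there exists an entire function a : ℂ → ℂ with a(x_i) = y_i for all i. -/
/-!
Look for `a` as a series `∑ cₙ pₙ(z) exp(tₙ x̄ₙ (z - xₙ))` with `pₙ(z) = ∏_{i<n} (z - xᵢ)`.
The `n`-th term vanishes at `x₀, …, xₙ₋₁`, so the values `a(xₙ) = yₙ` form a triangular system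
which is solved by choosing `cₙ` recursively. On the disc `‖z‖ ≤ ‖xₙ‖ - 1` the exponential
factor has modulus at most `exp(-tₙ)`, so choosing `tₙ` large in terms of `cₙ` makes the
`n`-th term at most `2⁻ⁿ` there. Since `‖xₙ‖ → ∞`, every disc is eventually covered, and the
series converges locally uniformly to an entire function.
-/

open Filter Finset Complex ComplexConjugate

theorem differentiable_tsum_of_eventually_norm_le {E : Type*} [NormedAddCommGroup E]
    [NormedSpace ℂ E] [CompleteSpace E] {f : ℕ → ℂ → E} {u : ℕ → ℝ} (hu : Summable u)
    (hf : ∀ n, Differentiable ℂ (f n))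
    (hfu : ∀ R, ∀ᶠ n in atTop, ∀ z, ‖z‖ < R → ‖f n z‖ ≤ u n) :
    Differentiable ℂ fun z => ∑' n, f n z := by
  intro z₀
  set R := ‖z₀‖ + 1
  have hz₀ : z₀ ∈ Metric.ball (0 : ℂ) R := by simp [R]
  obtain ⟨N, hN⟩ := (hfu R).exists_forall_of_atTop
  have hbounded : ∀ n, ∃ C, ∀ z ∈ Metric.closedBall (0 : ℂ) R, ‖f n z‖ ≤ C := fun n =>
    (isCompact_closedBall 0 R).exists_bound_of_continuousOn (hf n).continuous.continuousOn
  choose C hC using hbounded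
  set v : ℕ → ℝ := fun n => if n < N then C n else u n
  have hv : Summable v := hu.congr_atTop <| eventually_atTop.mpr
    ⟨N, fun n hn => by simp [v, not_lt.mpr hn]⟩
  have hfv : ∀ n, ∀ z ∈ Metric.ball (0 : ℂ) R, ‖f n z‖ ≤ v n := by
    intro n z hz
    by_cases hn : n < N
    · simpa [v, hn] using hC n z (Metric.ball_subset_closedBall hz)
    · simpa [v, hn] using hN n (not_lt.mp hn) z (mem_ball_zero_iff.mp hz)
  exact (differentiableOn_tsum_of_summable_norm hv (fun n => (hf n).differentiableOn)
    Metric.isOpen_ball hfv z₀ hz₀).differentiableAt (Metric.isOpen_ball.mem_nhds hz₀)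

theorem norm_cexp_mul_conj_mul_sub_le {t : ℝ} (ht : 0 ≤ t) {p z : ℂ} (hz : ‖z‖ + 1 ≤ ‖p‖) :
    ‖cexp (t * (conj p * (z - p)))‖ ≤ Real.exp (-t) := by
  have hre : (conj p * (z - p)).re ≤ ‖p‖ * (‖z‖ - ‖p‖) := by
    have h := re_le_norm (conj p * z)
    rw [norm_mul, RCLike.norm_conj] at h
    rw [mul_sub, sub_re, conj_mul']
    norm_cast
    linarith
  have hp : ‖p‖ * (‖z‖ - ‖p‖) ≤ -1 := by nlinarith [norm_nonneg z]
  rw [norm_exp, Real.exp_le_exp, re_ofReal_mul]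
  nlinarith [mul_le_mul_of_nonneg_left hre ht]

section Interpolation

variable (x : ℕ → ℂ)

noncomputable def nodePoly (n : ℕ) (z : ℂ) : ℂ := ∏ i ∈ range n, (z - x i)

theorem nodePoly_apply_of_lt {i n : ℕ} (hi : i < n) : nodePoly x n (x i) = 0 :=
  prod_eq_zero (mem_range.mpr hi) (sub_self (x i))

theorem nodePoly_self_ne_zero {x : ℕ → ℂ} (hx : Function.Injective x) (n : ℕ) :
    nodePoly x n (x n) ≠ 0 :=
  prod_ne_zero_iff.mpr fun _ hi => sub_ne_zero.mpr fun h => (mem_range.mp hi).ne' (hx h)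

theorem norm_nodePoly_le {r : ℝ} {z : ℂ} (hz : ‖z‖ ≤ r) (n : ℕ) :
    ‖nodePoly x n z‖ ≤ ∏ i ∈ range n, (r + ‖x i‖) := by
  rw [nodePoly, norm_prod]
  exact prod_le_prod (fun _ _ => norm_nonneg _) fun i _ =>
    (norm_sub_le z (x i)).trans (by linarith)

/-- The decay rate `tₙ`: the factor `2 ^ n` times a bound for `‖c pₙ‖` on `‖z‖ ≤ ‖xₙ‖ - 1`. -/
noncomputable def decayRate (n : ℕ) (c : ℂ) : ℝ :=
  2 ^ n * (‖c‖ * ∏ i ∈ range n, (‖x n‖ - 1 + ‖x i‖))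

noncomputable def interpTerm (n : ℕ) (c z : ℂ) : ℂ :=
  c * nodePoly x n z * cexp (decayRate x n c * (conj (x n) * (z - x n)))

theorem differentiable_interpTerm (n : ℕ) (c : ℂ) : Differentiable ℂ (interpTerm x n c) := by
  unfold interpTerm nodePoly
  fun_prop

theorem interpTerm_apply_of_lt {i n : ℕ} (hi : i < n) (c : ℂ) : interpTerm x n c (x i) = 0 := by
  simp [interpTerm, nodePoly_apply_of_lt x hi]

theorem interpTerm_self (n : ℕ) (c : ℂ) : interpTerm x n c (x n) = c * nodePoly x n (x n) := by
  simp [interpTerm]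

theorem norm_interpTerm_le {n : ℕ} (c : ℂ) {z : ℂ} (hz : ‖z‖ + 1 ≤ ‖x n‖) :
    ‖interpTerm x n c z‖ ≤ (1 / 2) ^ n := by
  set B := ‖c‖ * ∏ i ∈ range n, (‖x n‖ - 1 + ‖x i‖)
  have hcp : ‖c * nodePoly x n z‖ ≤ B := by
    rw [norm_mul]
    exact mul_le_mul_of_nonneg_left (norm_nodePoly_le x (by linarith) n) (norm_nonneg c)
  have hB : 0 ≤ B := (norm_nonneg _).trans hcp
  have ht : 0 ≤ decayRate x n c := by unfold decayRate; positivity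
  have hexp := norm_cexp_mul_conj_mul_sub_le ht hz
  have hBt : B * Real.exp (-decayRate x n c) ≤ (1 / 2) ^ n := by
    rw [Real.exp_neg, ← div_eq_mul_inv, div_le_iff₀ (Real.exp_pos _)]
    calc B = (1 / 2) ^ n * decayRate x n c := by
          simp only [B, decayRate, ← mul_assoc, ← mul_pow]; norm_num
      _ ≤ (1 / 2) ^ n * Real.exp (decayRate x n c) := by
          gcongr; linarith [Real.add_one_le_exp (decayRate x n c)]
  calc ‖interpTerm x n c z‖
      = ‖c * nodePoly x n z‖ * ‖cexp (decayRate x n c * (conj (x n) * (z - x n)))‖ :=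
        norm_mul _ _
    _ ≤ B * Real.exp (-decayRate x n c) := by gcongr
    _ ≤ (1 / 2) ^ n := hBt

variable (y : ℕ → ℂ)

noncomputable def interpCoeff : ℕ → ℂ
  | n => (y n - ∑ m ∈ (range n).attach, interpTerm x m (interpCoeff m) (x n)) /
      nodePoly x n (x n)
  decreasing_by exact mem_range.mp m.2

theorem interpCoeff_eq (n : ℕ) :
    interpCoeff x y n =
      (y n - ∑ m ∈ range n, interpTerm x m (interpCoeff x y m) (x n)) / nodePoly x n (x n) := by
  rw [interpCoeff, ← sum_attach (range n) fun m => interpTerm x m (interpCoeff x y m) (x n)]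

theorem sum_interpTerm_interpCoeff {x : ℕ → ℂ} (hx : Function.Injective x) (n : ℕ) :
    ∑ m ∈ range (n + 1), interpTerm x m (interpCoeff x y m) (x n) = y n := by
  rw [sum_range_succ, interpTerm_self, interpCoeff_eq,
    div_mul_cancel₀ _ (nodePoly_self_ne_zero hx n), add_sub_cancel]

end Interpolation

theorem stmt3 (x : ℕ → ℂ) (hx : Function.Injective x)
    (htend : Filter.Tendsto (fun i => ‖x i‖) Filter.atTop Filter.atTop)
    (y : ℕ → ℂ) :
    ∃ a : ℂ → ℂ, Differentiable ℂ a ∧ ∀ i : ℕ, a (x i) = y i := by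
  refine ⟨fun z => ∑' n, interpTerm x n (interpCoeff x y n) z, ?_, fun i => ?_⟩
  · refine differentiable_tsum_of_eventually_norm_le summable_geometric_two
      (fun n => differentiable_interpTerm x n _) fun R => ?_
    filter_upwards [htend.eventually_ge_atTop (R + 1)] with n hn z hz
    exact norm_interpTerm_le x _ (by linarith)
  · show ∑' n, _ = _
    rw [tsum_eq_sum (s := range (i + 1)) fun n hn => interpTerm_apply_of_lt x (by simpa using hn) _]
    exact sum_interpTerm_interpCoeff y hx i
end

section
/- Let X ⊂ ℂ² be a subset such that the first-coordinate projection π restricted to X is proper (as a map X → ℂ), and let a, b be entire functions with b not identically zero. Define α(x, y) = (x, (y - a(x))/b(x)) for b(x) ≠ 0. If (x_n, y_n) ∈ X with b(x_n) ≠ 0 and (x_n, y_n) leaving every compact subset of X' = {(x,y) ∈ X : b(x) ≠ 0}, and additionally whenever b(x₀) = 0 and (x₀, y₀) ∈ X is a limit point of the sequence then y₀ ≠ a(x₀), it follows that α(x_n, y_n) leaves every compact subset of ℂ². -/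
/-!
The left inverse `β(x, w) = (x, a x + w b x)` of `α(x, y) = (x, (y - a x) / b x)` is continuous
on all of `ℂ²`. If `α(q n)` returned infinitely often to a compact set, it would have a cluster
point `p`, and `β p` would be a cluster point of `q n`. The points of `X` over a compact
neighbourhood of `p.1` form a compact, hence closed, set, so `β p ∈ X`. If `b p.1 = 0` then
`β p = (p.1, a p.1)`, which the hypothesis on limit points excludes. If `b p.1 ≠ 0`, that
neighbourhood can be chosen with `b ≠ 0` on it; the set is then a compact subset of `X'`, which
`q n` eventually leaves, so `β p` is no cluster point after all.
-/

open Filter Topology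

def FstProperOn {α β : Type*} [TopologicalSpace α] [TopologicalSpace β] (X : Set (α × β)) :
    Prop :=
  ∀ K : Set α, IsCompact K → IsCompact {q ∈ X | q.1 ∈ K}

namespace FstProperOn

variable {α β ι : Type*} [TopologicalSpace α] [TopologicalSpace β] {X : Set (α × β)}
  {l : Filter ι} {q : ι → α × β} {z : α × β}

theorem mem_of_mapClusterPt [WeaklyLocallyCompactSpace α] [T2Space α] [T2Space β]
    (hX : FstProperOn X) (hqX : ∀ n, q n ∈ X) (hz : MapClusterPt z l q) : z ∈ X := by
  obtain ⟨L, hLc, hL⟩ := exists_compact_mem_nhds z.1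
  have hC := hX L hLc
  have hfst : Prod.fst ⁻¹' L ∈ 𝓝 z := continuous_fst.continuousAt.preimage_mem_nhds hL
  by_contra hzX
  have hzC : {q ∈ X | q.1 ∈ L}ᶜ ∈ 𝓝 z :=
    hC.isClosed.isOpen_compl.mem_nhds fun h ↦ hzX h.1
  obtain ⟨n, hnC, hnL⟩ := (hz.frequently (inter_mem hzC hfst)).exists
  exact hnC ⟨hqX n, hnL⟩

theorem not_mapClusterPt_of_fst_mem [LocallyCompactSpace α] (hX : FstProperOn X) {U : Set α}
    (hU : IsOpen U) (hqX : ∀ n, q n ∈ X)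
    (hleave : ∀ K : Set (α × β), IsCompact K → K ⊆ {p ∈ X | p.1 ∈ U} →
      ∀ᶠ n in l, q n ∉ K)
    (hzU : z.1 ∈ U) : ¬ MapClusterPt z l q := by
  intro hz
  obtain ⟨L, hL, hLU, hLc⟩ := local_compact_nhds (hU.mem_nhds hzU)
  have hout : ∀ᶠ n in l, q n ∉ {p ∈ X | p.1 ∈ L} :=
    hleave _ (hX L hLc) fun p hp ↦ ⟨hp.1, hLU hp.2⟩
  have hfreq := hz.frequently (continuous_fst.continuousAt.preimage_mem_nhds hL)
  obtain ⟨n, hnL, hnC⟩ := (hfreq.and_eventually hout).exists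
  exact hnC ⟨hqX n, hnL⟩

end FstProperOn

theorem stmt15_general (X : Set (ℂ × ℂ))
    (hproper : ∀ K : Set ℂ, IsCompact K → IsCompact {q ∈ X | q.1 ∈ K})
    (a b : ℂ → ℂ) (ha : Differentiable ℂ a) (hb : Differentiable ℂ b)
    (q : ℕ → ℂ × ℂ) (hqX : ∀ n, q n ∈ X) (hqb : ∀ n, b (q n).1 ≠ 0)
    (hdiv : ∀ K : Set (ℂ × ℂ), IsCompact K → K ⊆ {p ∈ X | b p.1 ≠ 0} →
      ∀ᶠ n in Filter.atTop, q n ∉ K)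
    (hlim : ∀ q₀ ∈ X, b q₀.1 = 0 → MapClusterPt q₀ Filter.atTop q →
      q₀.2 ≠ a q₀.1) :
    ∀ K : Set (ℂ × ℂ), IsCompact K →
      ∀ᶠ n in Filter.atTop,
        ((q n).1, ((q n).2 - a (q n).1) / b (q n).1) ∉ K := by
  intro K hK
  refine not_frequently.mp fun hfreq ↦ ?_
  obtain ⟨p, -, hp⟩ := hK.exists_mapClusterPt_of_frequently hfreq
  let β : ℂ × ℂ → ℂ × ℂ := fun w ↦ (w.1, a w.1 + w.2 * b w.1)
  have hβ : Continuous β := by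
    have := ha.continuous; have := hb.continuous
    fun_prop
  have hβp : MapClusterPt (β p) atTop q := by
    convert hp.continuousAt_comp hβ.continuousAt using 1
    funext n
    simp [β, div_mul_cancel₀ _ (hqb n)]
  have hβX : β p ∈ X := FstProperOn.mem_of_mapClusterPt hproper hqX hβp
  by_cases hbp : b p.1 = 0
  · exact hlim (β p) hβX hbp hβp (by simp [β, hbp])
  · exact FstProperOn.not_mapClusterPt_of_fst_mem hproper
      (isOpen_ne_fun hb.continuous continuous_const) hqX hdiv (z := β p) hbp hβp

theorem stmt15 (X : Set (ℂ × ℂ))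
    (hproper : ∀ K : Set ℂ, IsCompact K → IsCompact {q ∈ X | q.1 ∈ K})
    (a b : ℂ → ℂ) (ha : Differentiable ℂ a) (hb : Differentiable ℂ b)
    (hbne : b ≠ 0)
    (q : ℕ → ℂ × ℂ) (hqX : ∀ n, q n ∈ X) (hqb : ∀ n, b (q n).1 ≠ 0)
    (hdiv : ∀ K : Set (ℂ × ℂ), IsCompact K → K ⊆ {p ∈ X | b p.1 ≠ 0} →
      ∀ᶠ n in Filter.atTop, q n ∉ K)
    (hlim : ∀ q₀ ∈ X, b q₀.1 = 0 → MapClusterPt q₀ Filter.atTop q →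
      q₀.2 ≠ a q₀.1) :
    ∀ K : Set (ℂ × ℂ), IsCompact K →
      ∀ᶠ n in Filter.atTop,
        ((q n).1, ((q n).2 - a (q n).1) / b (q n).1) ∉ K :=
  stmt15_general X hproper a b ha hb q hqX hqb hdiv hlim
end

section
/- Every finite subset C of the Riemann sphere ℙ¹(ℂ) with C nonempty has the property that ℙ¹(ℂ) \ C admits a proper holomorphic embedding into ℂ². Explicitly, after a Möbius transformation sending one point of C to ∞, the complement ℂ \ {c₂, …, c_n} embeds via x ↦ (x, ∏ᵢ 1/(x - cᵢ)). -/
open Set OnePoint Module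

/-- A proper holomorphic embedding of an open subset `U ⊆ ℂ` into `ℂ²`. -/
def ProperHoloEmb (U : Set ℂ) (φ : ℂ → ℂ × ℂ) : Prop :=
  Set.InjOn φ U ∧ DifferentiableOn ℂ φ U ∧
  (∀ x ∈ U, ∃ v : ℂ × ℂ, HasDerivWithinAt φ v U x ∧ v ≠ 0) ∧
  ∀ K : Set (ℂ × ℂ), IsCompact K → IsCompact {x ∈ U | φ x ∈ K}

section Homogeneity

variable {V : Type*} [NormedAddCommGroup V] [NormedSpace ℝ V] [FiniteDimensional ℝ V]

/- `OnePoint V` is a sphere; conjugating the antipodal map moves `∞` to a finite point, and a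
translation then moves that point to `p`. -/
theorem OnePoint.exists_homeomorph_apply_coe_eq_infty (p : V) :
    ∃ H : OnePoint V ≃ₜ OnePoint V, H p = ∞ := by
  let e : OnePoint V ≃ₜ Metric.sphere (0 : EuclideanSpace ℝ (Fin (finrank ℝ V + 1))) 1 :=
    onePointEquivSphereOfFinrankEq (by simp)
  let A : OnePoint V ≃ₜ OnePoint V := e.trans ((Homeomorph.neg _).trans e.symm)
  have hA : A ∞ ≠ ∞ := fun h =>
    ne_neg_of_mem_unit_sphere ℝ (e ∞) (e.symm_apply_eq.mp h).symm
  obtain ⟨q, hq⟩ := ne_infty_iff_exists.mp hA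
  refine ⟨(Homeomorph.addRight (q - p)).onePointCongr.trans A.symm, ?_⟩
  show A.symm (OnePoint.map _ (p : OnePoint V)) = ∞
  rw [OnePoint.map_some, A.symm_apply_eq, ← hq]
  simp

theorem OnePoint.exists_homeomorph_infty_mem_image {C : Set (OnePoint V)} (hC : C.Nonempty) :
    ∃ H : OnePoint V ≃ₜ OnePoint V, ∞ ∈ H '' C := by
  obtain ⟨x, hx⟩ := hC
  induction x using OnePoint.rec with
  | infty => exact ⟨Homeomorph.refl _, _, hx, rfl⟩
  | coe p =>
    obtain ⟨H, hH⟩ := exists_homeomorph_apply_coe_eq_infty p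
    exact ⟨H, p, hx, hH⟩

end Homogeneity

theorem OnePoint.compl_subset_range_coe {X : Type*} {D : Set (OnePoint X)} (hD : ∞ ∈ D) :
    Dᶜ ⊆ range ((↑) : X → OnePoint X) := by
  rw [← compl_subset_compl, compl_compl, compl_range_coe]
  exact singleton_subset_iff.mpr hD

noncomputable def OnePoint.complHomeomorphOfInftyMem {X : Type*} [TopologicalSpace X]
    {D : Set (OnePoint X)} (hD : ∞ ∈ D) : ↥Dᶜ ≃ₜ ↥((((↑) : X → OnePoint X) ⁻¹' D)ᶜ) :=
  (isOpenEmbedding_coe.isEmbedding.homeomorphOfSubsetRange (compl_subset_range_coe hD)).symm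

/- On `{f ≠ 0}` the graph of `1 / f` is cut out by the closed condition `y * f x = 1`, so the
preimage of a compact set is the projection of a compact set. -/
theorem properHoloEmb_graph_inv {f : ℂ → ℂ} (hf : Differentiable ℂ f) :
    ProperHoloEmb {x | f x ≠ 0} (fun x => (x, (f x)⁻¹)) := by
  refine ⟨fun x _ y _ h => congrArg Prod.fst h, fun x hx => ?_, fun x hx => ?_, fun K hK => ?_⟩
  · exact (differentiableAt_id.prodMk ((hf x).inv hx)).differentiableWithinAt
  · refine ⟨(1, deriv (fun y => (f y)⁻¹) x), ?_, fun h => one_ne_zero (congrArg Prod.fst h)⟩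
    exact ((hasDerivAt_id x).prodMk ((hf x).inv hx).hasDerivAt).hasDerivWithinAt
  · have hgraph : {x ∈ {x | f x ≠ 0} | (x, (f x)⁻¹) ∈ K} =
        Prod.fst '' (K ∩ {q | q.2 * f q.1 = 1}) := by
      ext x
      constructor
      · rintro ⟨hx, hxK⟩
        exact ⟨_, ⟨hxK, inv_mul_cancel₀ hx⟩, rfl⟩
      · rintro ⟨⟨x, y⟩, ⟨hK, hy : y * f x = 1⟩, rfl⟩
        rw [eq_inv_of_mul_eq_one_left hy] at hK
        exact ⟨right_ne_zero_of_mul_eq_one hy, hK⟩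
    rw [hgraph]
    refine (hK.inter_right (isClosed_eq ?_ continuous_const)).image continuous_fst
    exact continuous_snd.mul (hf.continuous.comp continuous_fst)

theorem stmt17 (C : Set (OnePoint ℂ)) (hfin : C.Finite) (hne : C.Nonempty) :
    ∃ (n : ℕ) (c : Fin n → ℂ), Function.Injective c ∧
      Nonempty (↥(Cᶜ) ≃ₜ ↥((Set.range c)ᶜ : Set ℂ)) ∧
      ProperHoloEmb (Set.range c)ᶜ (fun x => (x, ∏ i, (x - c i)⁻¹)) := by
  obtain ⟨H, hH⟩ := exists_homeomorph_infty_mem_image hne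
  obtain ⟨n, c, hc, hrange⟩ :=
    ((hfin.image H).preimage coe_injective.injOn).fin_param
  refine ⟨n, c, hc, ⟨?_⟩, ?_⟩
  · refine (H.image Cᶜ).trans <| (Homeomorph.setCongr (H.image_compl C)).trans <|
      (complHomeomorphOfInftyMem hH).trans (Homeomorph.setCongr ?_)
    rw [hrange]
  · have hU : (range c)ᶜ = {x | ∏ i, (x - c i) ≠ 0} := by
      ext x
      simp only [mem_compl_iff, mem_range, not_exists, mem_ofPred_eq, Finset.prod_ne_zero_iff,
        Finset.mem_univ, forall_const, sub_ne_zero]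
      exact forall_congr' fun _ => ne_comm
    simpa only [hU, Finset.prod_inv_distrib] using
      properHoloEmb_graph_inv (f := fun x => ∏ i, (x - c i)) (by fun_prop)
end
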